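/- With A_0 as above (a^0_{ij} = −(d_{ij} − d_{i,N+1}) c_i for i ≠ j, a^0_{ii} = Σ_{j≤N, j≠i}(d_{ij} − d_{i,N+1}) c_j + d_{i,N+1}), A_0 is invertible, its spectrum is contained in [δ, Δ) where δ = min_{i≠j} d_{ij} and Δ = 2 Σ_{i≠j} d_{ij}, and det(A_0) ≥ δ^N. -/

import Mathlib

/-!
Extend an eigenvector `u` of `A₀` to `p : Fin (N + 1) → ℂ` with `∑ p = 0` and put `q = p / c`.
The eigenvalue equation becomes `L q = z q` for the weighted Laplacian
`(L q)_j = ∑_k d_jk c_k (q_j - q_k)`, which is self-adjoint for the weight `c`. Pairing with `c q̄`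
gives the Rayleigh quotient `z = E / V`, where `E = ∑ d_jk c_j c_k |q_j - q_k|²` and
`V = ∑ c_j c_k |q_j - q_k|² = 2 ∑ c_j |q_j|² > 0` (since `∑ c = 1` and `∑ c q = 0`).
So `z` is real, and comparing `E` with `V` termwise gives `δ V ≤ E ≤ (∑_{j ≠ k} d_jk / 2) V`.
The determinant is the product of these eigenvalues, hence at least `δ ^ N`.
-/

open Finset Complex ComplexConjugate Matrix

section Laplacian

variable {ι R : Type*} [Fintype ι]

section CommRing

variable [CommRing R]

def weightedLaplacian (d : Matrix ι ι R) (c q : ι → R) (j : ι) : R :=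
  ∑ k, d j k * c k * (q j - q k)

theorem sum_mul_weightedLaplacian_eq_zero {d : Matrix ι ι R} (hd : d.IsSymm) (c q : ι → R) :
    ∑ j, c j * weightedLaplacian d c q j = 0 := by
  have hexpand : ∑ j, c j * weightedLaplacian d c q j =
      ∑ j, ∑ k, c j * d j k * c k * q j - ∑ j, ∑ k, c j * d j k * c k * q k := by
    rw [← sum_sub_distrib]
    refine sum_congr rfl fun j _ => ?_
    rw [weightedLaplacian, mul_sum, ← sum_sub_distrib]
    exact sum_congr rfl fun k _ => by ring
  have hswap : ∑ j, ∑ k, c j * d j k * c k * q k = ∑ j, ∑ k, c j * d j k * c k * q j := by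
    rw [sum_comm]
    refine sum_congr rfl fun j _ => sum_congr rfl fun k _ => ?_
    rw [hd.apply j k]
    ring
  rw [hexpand, hswap, sub_self]

theorem two_mul_sum_mul_weightedLaplacian {d : Matrix ι ι R} (hd : d.IsSymm) (c w q : ι → R) :
    2 * ∑ j, c j * w j * weightedLaplacian d c q j =
      ∑ j, ∑ k, d j k * c j * c k * (w j - w k) * (q j - q k) := by
  have hexpand : ∑ j, c j * w j * weightedLaplacian d c q j =
      ∑ j, ∑ k, d j k * c j * c k * w j * (q j - q k) := by
    refine sum_congr rfl fun j _ => ?_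
    rw [weightedLaplacian, mul_sum]
    exact sum_congr rfl fun k _ => by ring
  have hswap : ∑ j, ∑ k, d j k * c j * c k * w k * (q j - q k) =
      -∑ j, ∑ k, d j k * c j * c k * w j * (q j - q k) := by
    rw [sum_comm, ← sum_neg_distrib]
    refine sum_congr rfl fun j _ => ?_
    rw [← sum_neg_distrib]
    refine sum_congr rfl fun k _ => ?_
    rw [hd.apply j k]
    ring
  have hsplit : ∀ j k, d j k * c j * c k * (w j - w k) * (q j - q k) =
      d j k * c j * c k * w j * (q j - q k) - d j k * c j * c k * w k * (q j - q k) :=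
    fun j k => by ring
  simp only [hsplit, sum_sub_distrib]
  rw [hswap, hexpand]
  ring

theorem sum_sum_mul_sub_mul_sub (c w q : ι → R) :
    ∑ j, ∑ k, c j * c k * (w j - w k) * (q j - q k) =
      2 * ((∑ j, c j) * ∑ j, c j * w j * q j - (∑ j, c j * w j) * ∑ j, c j * q j) := by
  have hsplit : ∀ j k, c j * c k * (w j - w k) * (q j - q k) =
      c j * w j * q j * c k + c j * (c k * w k * q k) - c j * w j * (c k * q k) -
        c j * q j * (c k * w k) := fun j k => by ring
  simp only [hsplit, sum_add_distrib, sum_sub_distrib, ← mul_sum, ← sum_mul]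
  ring

end CommRing

section Bounds

variable {d : Matrix ι ι ℝ} {f : ι → ι → ℝ}

theorem mul_sum_sum_le_sum_sum_mul {δ : ℝ} (hδ : ∀ j k, j ≠ k → δ ≤ d j k)
    (hf : ∀ j k, 0 ≤ f j k) (hf_diag : ∀ j, f j j = 0) :
    δ * ∑ j, ∑ k, f j k ≤ ∑ j, ∑ k, d j k * f j k := by
  simp only [mul_sum]
  refine sum_le_sum fun j _ => sum_le_sum fun k _ => ?_
  rcases eq_or_ne j k with rfl | hjk
  · simp [hf_diag]
  · exact mul_le_mul_of_nonneg_right (hδ j k hjk) (hf j k)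

theorem sum_sum_mul_le [DecidableEq ι] (hd : ∀ j k, j ≠ k → 0 ≤ d j k)
    (hf : ∀ j k, 0 ≤ f j k) (hf_symm : ∀ j k, f j k = f k j) (hf_diag : ∀ j, f j j = 0) :
    ∑ j, ∑ k, d j k * f j k ≤ (∑ j, ∑ k ∈ univ.erase j, d j k) / 2 * ∑ j, ∑ k, f j k := by
  set V := ∑ j, ∑ k, f j k
  have hpair : ∀ j k, j ≠ k → f j k ≤ V / 2 := by
    intro j k hjk
    have h := add_le_sum (f := fun a => ∑ b, f a b) (fun a _ => sum_nonneg fun b _ => hf a b)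
      (mem_univ j) (mem_univ k) hjk
    have hj := single_le_sum (fun b _ => hf j b) (mem_univ k)
    have hk := single_le_sum (fun b _ => hf k b) (mem_univ j)
    linarith [hf_symm j k]
  calc ∑ j, ∑ k, d j k * f j k = ∑ j, ∑ k ∈ univ.erase j, d j k * f j k :=
        sum_congr rfl fun j _ => (sum_erase _ (by simp [hf_diag])).symm
    _ ≤ ∑ j, ∑ k ∈ univ.erase j, d j k * (V / 2) :=
        sum_le_sum fun j _ => sum_le_sum fun k hk =>
          mul_le_mul_of_nonneg_left (hpair j k (ne_of_mem_erase hk).symm)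
            (hd j k (ne_of_mem_erase hk).symm)
    _ = (∑ j, ∑ k ∈ univ.erase j, d j k) / 2 * V := by
        simp only [← sum_mul]
        ring

end Bounds

section RayleighQuotient

variable {d : Matrix ι ι ℝ} {c : ι → ℝ} {q : ι → ℂ}

theorem sum_sum_mul_normSq_sub (hc : ∑ j, c j = 1) (hq : ∑ j, (c j : ℂ) * q j = 0) :
    ∑ j, ∑ k, c j * c k * normSq (q j - q k) = 2 * ∑ j, c j * normSq (q j) := by
  have h := sum_sum_mul_sub_mul_sub (fun j => (c j : ℂ)) (conj ∘ q) q
  simp only [Function.comp_apply, hq, mul_zero, sub_zero] at h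
  have hC : ((∑ j, ∑ k, c j * c k * normSq (q j - q k) : ℝ) : ℂ) =
      ((2 * ∑ j, c j * normSq (q j) : ℝ) : ℂ) := by
    push_cast
    simp only [normSq_eq_conj_mul_self, map_sub, ← mul_assoc]
    rw [h, ← ofReal_sum, hc, ofReal_one, one_mul]
  exact_mod_cast hC

theorem eigenvalue_mul_sum_sum_normSq_sub {z : ℂ} (hd : d.IsSymm) (hc : ∑ j, c j = 1)
    (hq : ∑ j, (c j : ℂ) * q j = 0)
    (hz : ∀ j, weightedLaplacian (d.map ofReal) (fun j => (c j : ℂ)) q j = z * q j) :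
    z * ((∑ j, ∑ k, c j * c k * normSq (q j - q k) : ℝ) : ℂ) =
      ((∑ j, ∑ k, d j k * (c j * c k * normSq (q j - q k)) : ℝ) : ℂ) := by
  have h := two_mul_sum_mul_weightedLaplacian (hd.map ofReal) (fun j => (c j : ℂ)) (conj ∘ q) q
  simp only [hz, Function.comp_apply, map_apply, ← map_sub] at h
  rw [sum_sum_mul_normSq_sub hc hq]
  push_cast
  simp only [normSq_eq_conj_mul_self, ← mul_assoc, ← h, mul_sum]
  exact sum_congr rfl fun j _ => by ring

theorem eigenvalue_bounds_of_weightedLaplacian [DecidableEq ι] {δ : ℝ} {z : ℂ} (hd : d.IsSymm)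
    (hδ : ∀ j k, j ≠ k → δ ≤ d j k) (hd_nonneg : ∀ j k, j ≠ k → 0 ≤ d j k)
    (hc : ∀ j, 0 < c j) (hc_sum : ∑ j, c j = 1) (hq0 : q ≠ 0) (hq : ∑ j, (c j : ℂ) * q j = 0)
    (hz : ∀ j, weightedLaplacian (d.map ofReal) (fun j => (c j : ℂ)) q j = z * q j) :
    z.im = 0 ∧ δ ≤ z.re ∧ z.re ≤ (∑ j, ∑ k ∈ univ.erase j, d j k) / 2 := by
  set f : ι → ι → ℝ := fun j k => c j * c k * normSq (q j - q k)
  have hf : ∀ j k, 0 ≤ f j k := fun j k =>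
    mul_nonneg (mul_pos (hc j) (hc k)).le (normSq_nonneg _)
  have hf_symm : ∀ j k, f j k = f k j := fun j k => by
    simp only [f, ← normSq_neg (q j - q k), neg_sub, mul_comm (c j)]
  have hf_diag : ∀ j, f j j = 0 := fun j => by simp [f]
  have hV : 0 < ∑ j, ∑ k, f j k := by
    obtain ⟨i, hi⟩ := Function.ne_iff.1 hq0
    rw [sum_sum_mul_normSq_sub hc_sum hq]
    refine mul_pos two_pos (sum_pos' (fun j _ => mul_nonneg (hc j).le (normSq_nonneg _))
      ⟨i, mem_univ i, mul_pos (hc i) (normSq_pos.2 hi)⟩)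
  have hz_eq : z = ((∑ j, ∑ k, d j k * f j k) / ∑ j, ∑ k, f j k : ℝ) := by
    rw [ofReal_div, eq_div_iff (ofReal_ne_zero.2 hV.ne')]
    exact eigenvalue_mul_sum_sum_normSq_sub hd hc_sum hq hz
  rw [hz_eq, ofReal_im, ofReal_re, le_div_iff₀ hV, div_le_iff₀ hV]
  exact ⟨rfl, mul_sum_sum_le_sum_sum_mul hδ hf hf_diag,
    sum_sum_mul_le hd_nonneg hf hf_symm hf_diag⟩

end RayleighQuotient

end Laplacian

theorem Matrix.exists_mulVec_eq_smul_of_isRoot_charpoly {n K : Type*} [Fintype n] [DecidableEq n]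
    [Field K] {M : Matrix n n K} {z : K} (h : M.charpoly.IsRoot z) :
    ∃ v ≠ 0, M *ᵥ v = z • v := by
  rw [Polynomial.IsRoot, eval_charpoly] at h
  obtain ⟨v, hv0, hv⟩ := exists_mulVec_eq_zero_iff.2 h
  refine ⟨v, hv0, ?_⟩
  rw [sub_mulVec, sub_eq_zero, scalar_apply] at hv
  ext i
  simpa [mulVec_diagonal] using (congrFun hv i).symm

theorem Complex.pow_card_le_re_multiset_prod {δ : ℝ} (hδ : 0 ≤ δ) {s : Multiset ℂ}
    (h : ∀ z ∈ s, z.im = 0 ∧ δ ≤ z.re) : s.prod.im = 0 ∧ δ ^ Multiset.card s ≤ s.prod.re := by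
  induction s using Multiset.induction_on with
  | empty => simp
  | cons a s ih =>
    obtain ⟨ha_im, ha_re⟩ := h a (Multiset.mem_cons_self a s)
    obtain ⟨hs_im, hs_re⟩ := ih fun z hz => h z (Multiset.mem_cons_of_mem hz)
    simp only [Multiset.prod_cons, mul_im, mul_re, ha_im, hs_im, Multiset.card_cons, pow_succ']
    constructor
    · ring
    · nlinarith [pow_nonneg hδ (Multiset.card s)]

theorem Matrix.pow_card_le_det_of_isRoot_charpoly {n : Type*} [Fintype n] [DecidableEq n]
    {A : Matrix n n ℝ} {δ : ℝ} (hδ : 0 ≤ δ)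
    (h : ∀ z : ℂ, (A.map ofReal).charpoly.IsRoot z → z.im = 0 ∧ δ ≤ z.re) :
    δ ^ Fintype.card n ≤ A.det := by
  have hdet : (A.det : ℂ) = (A.map ofReal).charpoly.roots.prod := by
    rw [← det_eq_prod_roots_charpoly]
    exact RingHom.map_det ofRealHom A
  have hcard : Multiset.card (A.map ofReal).charpoly.roots = Fintype.card n := by
    rw [IsAlgClosed.card_roots_eq_natDegree, charpoly_natDegree_eq_dim]
  obtain ⟨-, hre⟩ := pow_card_le_re_multiset_prod hδ fun z hz =>
    h z (Polynomial.isRoot_of_mem_roots hz)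
  rwa [hcard, ← hdet, ofReal_re] at hre

section Compressed

/-- The closed form of `A₀`: the map `p ↦ (p_j ∑_k d_jk c_k - c_j ∑_k d_jk p_k)_j` on the
hyperplane `∑ p = 0`, in the coordinates `p_0, …, p_{N-1}`. -/
def compressedLaplacian {N : ℕ} (d : Matrix (Fin (N + 1)) (Fin (N + 1)) ℝ)
    (c : Fin (N + 1) → ℝ) : Matrix (Fin N) (Fin N) ℝ :=
  of fun j i => (if i = j then ∑ k, d j.castSucc k * c k else 0) -
    c j.castSucc * (d j.castSucc i.castSucc - d j.castSucc (Fin.last N))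

variable {N : ℕ} {d : Matrix (Fin (N + 1)) (Fin (N + 1)) ℝ} {c : Fin (N + 1) → ℝ}

theorem eq_compressedLaplacian {A0 : Matrix (Fin N) (Fin N) ℝ} (hddiag : ∀ i, d i i = 0)
    (hc_sum : ∑ i, c i = 1)
    (hA0off : ∀ i j : Fin N, i ≠ j → A0 i j =
      -(d i.castSucc j.castSucc - d i.castSucc (Fin.last N)) * c i.castSucc)
    (hA0diag : ∀ i : Fin N, A0 i i =
      (∑ j ∈ univ.erase i,
        (d i.castSucc j.castSucc - d i.castSucc (Fin.last N)) * c j.castSucc) +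
        d i.castSucc (Fin.last N)) :
    A0 = compressedLaplacian d c := by
  ext j i
  rcases eq_or_ne i j with rfl | hij
  · have hc_split : ∑ k : Fin N, c k.castSucc + c (Fin.last N) = 1 := by
      rwa [← Fin.sum_univ_castSucc]
    have hdist : ∑ k ∈ univ.erase i, (d i.castSucc k.castSucc - d i.castSucc (Fin.last N)) *
        c k.castSucc = ∑ k ∈ univ.erase i, d i.castSucc k.castSucc * c k.castSucc -
          d i.castSucc (Fin.last N) * ∑ k ∈ univ.erase i, c k.castSucc := by
      rw [mul_sum, ← sum_sub_distrib]
      exact sum_congr rfl fun k _ => by ring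
    rw [hA0diag, hdist, sum_erase _ (by simp [hddiag]), sum_erase_eq_sub (mem_univ i),
      compressedLaplacian, of_apply, if_pos rfl, Fin.sum_univ_castSucc, hddiag]
    linear_combination -d i.castSucc (Fin.last N) * hc_split
  · rw [hA0off j i hij.symm, compressedLaplacian, of_apply, if_neg hij]
    ring

theorem compressedLaplacian_mulVec (hc : ∀ k, c k ≠ 0) {p : Fin (N + 1) → ℂ}
    (hp : ∑ k, p k = 0) (j : Fin N) :
    ((compressedLaplacian d c).map ofReal *ᵥ fun i => p i.castSucc) j =
      c j.castSucc * weightedLaplacian (d.map ofReal) (fun k => (c k : ℂ))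
        (fun k => p k / c k) j.castSucc := by
  have hrhs : (c j.castSucc : ℂ) * weightedLaplacian (d.map ofReal) (fun k => (c k : ℂ))
      (fun k => p k / c k) j.castSucc =
        (∑ k, (d j.castSucc k : ℂ) * c k) * p j.castSucc -
          c j.castSucc * ∑ k, (d j.castSucc k : ℂ) * p k := by
    rw [weightedLaplacian, mul_sum, sum_mul, mul_sum, ← sum_sub_distrib]
    refine sum_congr rfl fun k _ => ?_
    rw [map_apply]
    field_simp [ofReal_ne_zero.2 (hc k), ofReal_ne_zero.2 (hc j.castSucc)]
  have hlast : p (Fin.last N) = -∑ i : Fin N, p i.castSucc := by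
    rw [Fin.sum_univ_castSucc] at hp
    linear_combination hp
  rw [hrhs, Fin.sum_univ_castSucc (fun k => (d j.castSucc k : ℂ) * p k), hlast]
  have hentry : ∀ i, ((compressedLaplacian d c).map ofReal) j i * p i.castSucc =
      (if i = j then (∑ k, (d j.castSucc k : ℂ) * c k) * p j.castSucc else 0) -
        c j.castSucc * ((d j.castSucc i.castSucc : ℂ) * p i.castSucc -
          d j.castSucc (Fin.last N) * p i.castSucc) := by
    intro i
    rw [map_apply, compressedLaplacian, of_apply]
    split_ifs with h
    · subst h; push_cast; ring
    · push_cast; ring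
  rw [mulVec, dotProduct, sum_congr rfl fun i _ => hentry i, sum_sub_distrib,
    sum_ite_eq' univ j, if_pos (mem_univ j), ← mul_sum, sum_sub_distrib, ← mul_sum]
  ring

theorem compressedLaplacian_eigenvalue_bounds {δ : ℝ} {z : ℂ} (hd : d.IsSymm)
    (hδ : ∀ j k, j ≠ k → δ ≤ d j k) (hd_nonneg : ∀ j k, j ≠ k → 0 ≤ d j k)
    (hc : ∀ k, 0 < c k) (hc_sum : ∑ k, c k = 1)
    (hz : ((compressedLaplacian d c).map ofReal).charpoly.IsRoot z) :
    z.im = 0 ∧ δ ≤ z.re ∧ z.re ≤ (∑ j, ∑ k ∈ univ.erase j, d j k) / 2 := by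
  obtain ⟨u, hu0, hu⟩ := exists_mulVec_eq_smul_of_isRoot_charpoly hz
  let p : Fin (N + 1) → ℂ := Fin.snoc u (-∑ i, u i)
  have hpu : (fun i => p i.castSucc) = u := funext fun i => Fin.snoc_castSucc ..
  have hp : ∑ k, p k = 0 := by simp [p, Fin.sum_univ_castSucc]
  have hcne : ∀ k, (c k : ℂ) ≠ 0 := fun k => ofReal_ne_zero.2 (hc k).ne'
  set q : Fin (N + 1) → ℂ := fun k => p k / c k
  have hcq : ∀ k, (c k : ℂ) * q k = p k := fun k => mul_div_cancel₀ _ (hcne k)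
  have hq : ∑ k, (c k : ℂ) * q k = 0 := by simpa only [hcq] using hp
  have hq0 : q ≠ 0 := by
    obtain ⟨i, hi⟩ := Function.ne_iff.1 hu0
    refine Function.ne_iff.2 ⟨i.castSucc, div_ne_zero ?_ (hcne _)⟩
    simpa [← hpu] using hi
  set L := weightedLaplacian (d.map ofReal) (fun k => (c k : ℂ)) q
  have hrow : ∀ j : Fin N, c j.castSucc * L j.castSucc = c j.castSucc * (z * q j.castSucc) := by
    intro j
    rw [← compressedLaplacian_mulVec (fun k => (hc k).ne') hp, hpu, hu, Pi.smul_apply,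
      smul_eq_mul, ← congrFun hpu j, ← hcq]
    ring
  have hlast : c (Fin.last N) * L (Fin.last N) = c (Fin.last N) * (z * q (Fin.last N)) := by
    have hsum : ∑ k, (c k : ℂ) * L k = 0 :=
      sum_mul_weightedLaplacian_eq_zero (hd.map ofReal) _ q
    rw [Fin.sum_univ_castSucc] at hsum hq
    simp only [hrow, mul_left_comm _ z, ← mul_sum] at hsum
    linear_combination hsum - z * hq
  have hz' : ∀ k, L k = z * q k := fun k =>
    mul_left_cancel₀ (hcne k) (Fin.lastCases hlast hrow k)
  exact eigenvalue_bounds_of_weightedLaplacian hd hδ hd_nonneg hc hc_sum hq0 hq hz'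

end Compressed

theorem stmt17_general (N : ℕ)
    (d : Matrix (Fin (N + 1)) (Fin (N + 1)) ℝ) (hd : d.IsSymm)
    (hdpos : ∀ i j, i ≠ j → 0 < d i j) (hddiag : ∀ i, d i i = 0)
    (δ : ℝ) (hδpos : 0 < δ) (hδ : ∀ i j, i ≠ j → δ ≤ d i j)
    (c : Fin (N + 1) → ℝ) (hc : ∀ i, 0 < c i) (hsum : ∑ i, c i = 1)
    (A0 : Matrix (Fin N) (Fin N) ℝ)
    (hA0off : ∀ i j : Fin N, i ≠ j → A0 i j =
      -(d i.castSucc j.castSucc - d i.castSucc (Fin.last N)) * c i.castSucc)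
    (hA0diag : ∀ i : Fin N, A0 i i =
      (∑ j ∈ Finset.univ.erase i,
        (d i.castSucc j.castSucc - d i.castSucc (Fin.last N)) * c j.castSucc) +
        d i.castSucc (Fin.last N)) :
    A0.det ≠ 0 ∧ δ ^ N ≤ A0.det ∧
      ∀ z : ℂ, (A0.map (fun t : ℝ => (t : ℂ))).charpoly.IsRoot z →
        z.im = 0 ∧ δ ≤ z.re ∧
          z.re < 2 * ∑ i, ∑ j ∈ Finset.univ.erase i, d i j := by
  obtain rfl := eq_compressedLaplacian hddiag hsum hA0off hA0diag
  have hroot (z : ℂ) (hz : ((compressedLaplacian d c).map ofReal).charpoly.IsRoot z) :=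
    compressedLaplacian_eigenvalue_bounds hd hδ (fun i j hij => (hdpos i j hij).le) hc hsum hz
  have hdet : δ ^ N ≤ (compressedLaplacian d c).det := by
    simpa using pow_card_le_det_of_isRoot_charpoly hδpos.le fun z hz =>
      (hroot z hz).imp_right And.left
  refine ⟨((pow_pos hδpos N).trans_le hdet).ne', hdet, fun z hz => ?_⟩
  obtain ⟨him, hlow, hup⟩ := hroot z hz
  exact ⟨him, hlow, by linarith⟩

/-- The matrix `A_0` is invertible, its spectrum is contained in `[δ, Δ)` with
`δ = min_{i≠j} d_{ij}` (here: any positive lower bound of the off-diagonal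
entries) and `Δ = 2 ∑_{i≠j} d_{ij}`, and `det A_0 ≥ δ^N`. -/
theorem stmt17 (N : ℕ) (hN : 2 ≤ N)
    (d : Matrix (Fin (N + 1)) (Fin (N + 1)) ℝ) (hd : d.IsSymm)
    (hdpos : ∀ i j, i ≠ j → 0 < d i j) (hddiag : ∀ i, d i i = 0)
    (δ : ℝ) (hδpos : 0 < δ) (hδ : ∀ i j, i ≠ j → δ ≤ d i j)
    (c : Fin (N + 1) → ℝ) (hc : ∀ i, 0 < c i) (hsum : ∑ i, c i = 1)
    (A0 : Matrix (Fin N) (Fin N) ℝ)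
    (hA0off : ∀ i j : Fin N, i ≠ j → A0 i j =
      -(d i.castSucc j.castSucc - d i.castSucc (Fin.last N)) * c i.castSucc)
    (hA0diag : ∀ i : Fin N, A0 i i =
      (∑ j ∈ Finset.univ.erase i,
        (d i.castSucc j.castSucc - d i.castSucc (Fin.last N)) * c j.castSucc) +
        d i.castSucc (Fin.last N)) :
    A0.det ≠ 0 ∧ δ ^ N ≤ A0.det ∧
      ∀ z : ℂ, (A0.map (fun t : ℝ => (t : ℂ))).charpoly.IsRoot z →
        z.im = 0 ∧ δ ≤ z.re ∧
          z.re < 2 * ∑ i, ∑ j ∈ Finset.univ.erase i, d i j :=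
  stmt17_general N d hd hdpos hddiag δ hδpos hδ c hc hsum A0 hA0off hA0diag
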